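/- If a Bloom filter has no false negatives, then in the LWCSS scheme within a single frame, for each item at most one non-essential-classified arrival is dropped: the first such arrival inserts the item into the Bloom filter, and every subsequent non-essential-classified arrival of the same item in the frame tests positive and is inserted into the Space Saving instance. -/
import Mathlib


/-- Processing a frame (a list of arrivals paired with their non-essential
classification) through the LWCSS filter: a predicted non-essential arrival is
dropped iff the Bloom filter does not yet contain the item, in which case the
item is added to the filter. Returns the list of dropped arrivals. -/
def bloomDropped {α σ : Type} (add : σ → α → σ) (mem : σ → α → Bool) :
    σ → List (α × Bool) → List α
  | _, [] => []
  | s, (x, ne) :: rest =>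
      if ne then
        if mem s x then bloomDropped add mem s rest
        else x :: bloomDropped add mem (add s x) rest
      else bloomDropped add mem s rest

lemma bloomDropped_count_zero {α σ : Type} [DecidableEq α]
    (add : σ → α → σ) (mem : σ → α → Bool)
    (hMono : ∀ (s : σ) (x y : α), mem s y = true → mem (add s x) y = true)
    (x : α) :
    ∀ (frame : List (α × Bool)) (s : σ), mem s x = true →
      (bloomDropped add mem s frame).count x = 0 := by
  intro frame
  induction frame with
  | nil => intro s _; simp [bloomDropped]
  | cons p rest ih =>
    intro s hs
    obtain ⟨y, ne⟩ := p
    by_cases hne : ne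
    · by_cases hm : mem s y = true
      · simp [bloomDropped, hne, hm, ih s hs]
      · have hy : y ≠ x := fun h => hm (h ▸ hs)
        simp [bloomDropped, hne, hm, List.count_cons, hy,
          ih (add s y) (hMono s y x hs)]
    · simp [bloomDropped, hne, ih s hs]

/-- if the Bloom filter has no false negatives, then within a
single frame at most one non-essential-classified arrival of each item is
dropped. -/
theorem at_most_one_drop_per_item {α σ : Type} [DecidableEq α]
    (add : σ → α → σ) (mem : σ → α → Bool)
    (hNoFN : ∀ (s : σ) (x : α), mem (add s x) x = true)
    (hMono : ∀ (s : σ) (x y : α), mem s y = true → mem (add s x) y = true)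
    (s0 : σ) (frame : List (α × Bool)) (x : α) :
    (bloomDropped add mem s0 frame).count x ≤ 1 := by
  induction frame generalizing s0 with
  | nil => simp [bloomDropped]
  | cons p rest ih =>
    obtain ⟨y, ne⟩ := p
    by_cases hne : ne
    · by_cases hm : mem s0 y = true
      · simpa [bloomDropped, hne, hm] using ih s0
      · by_cases hxy : y = x
        · subst hxy
          have := bloomDropped_count_zero add mem hMono y rest (add s0 y)
            (hNoFN s0 y)
          simp [bloomDropped, hne, hm, List.count_cons, this]
        · simpa [bloomDropped, hne, hm, List.count_cons, hxy] using ih (add s0 y)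
    · simpa [bloomDropped, hne] using ih s0
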